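/- arXiv:1310.3736 — 6 statements merged into one kernel-verified Lean document; each statement's English description precedes it below -/
import Mathlib

section
/- For any nonnegative real a, the ratio of heat kernel values at the identity on SU(2) satisfies K_{a*alpha}(1)/K_{alpha}(1) -> a^{-3/2} as alpha -> 0+, where K_alpha(1) = sum_{j in N/2} (2j+1)^2 exp(-alpha j(j+1)). -/
open Filter

/-- The `SU(2)` heat kernel at the identity, `K_α(1) = ∑_{j ∈ ℕ/2} (2j+1)² e^{-α j(j+1)}`,
parametrized by `n = 2j ∈ ℕ`, so that `2j+1 = n+1` and `j(j+1) = n(n+2)/4`. -/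
noncomputable def heatKernelId (α : ℝ) : ℝ :=
  ∑' n : ℕ, ((n : ℝ) + 1) ^ 2 * Real.exp (-α * ((n : ℝ) * ((n : ℝ) + 2)) / 4)

open MeasureTheory Set Topology

/-! With `t = √α` and `g(x) = x² e^{-x²/4}`, completing the square `n(n+2) = (n+1)² - 1` gives
`α^{3/2} K_α(1) = e^{α/4} · t ∑_{n ≥ 1} g(n t)`, a right Riemann sum of `g` with step `t`.
On each cell `g` varies by at most `∫ |g'|` over the cell, so the sum is within `t ∫_0^∞ |g'|` of
`∫_0^∞ g`. Hence `α^{3/2} K_α(1) → ∫_0^∞ g > 0`, and the ratio `K_{aα}(1) / K_α(1)` behaves like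
`(aα)^{-3/2} / α^{-3/2} = a^{-3/2}`. -/

section RiemannSum

variable {g g' : ℝ → ℝ}

theorem abs_mul_sub_integral_le_of_hasDerivAt {a b : ℝ} (hab : a ≤ b)
    (hg : ∀ x ∈ Icc a b, HasDerivAt g (g' x) x) (hg' : IntervalIntegrable g' volume a b) :
    |(b - a) * g b - ∫ x in a..b, g x| ≤ (b - a) * ∫ x in a..b, |g' x| := by
  have hg_cont : ContinuousOn g (Icc a b) := fun x hx =>
    (hg x hx).continuousAt.continuousWithinAt
  have hvar : ∀ x ∈ uIoc a b, ‖g b - g x‖ ≤ ∫ y in a..b, |g' y| := by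
    intro x hx
    rw [uIoc_of_le hab] at hx
    have hsub : uIcc x b ⊆ uIcc a b :=
      uIcc_subset_uIcc_right (Icc_subset_uIcc (Ioc_subset_Icc_self hx))
    rw [← intervalIntegral.integral_eq_sub_of_hasDerivAt
      (fun y hy => hg y (uIcc_of_le hab ▸ hsub hy)) (hg'.mono_set hsub)]
    calc ‖∫ y in x..b, g' y‖ ≤ ∫ y in x..b, |g' y| :=
          intervalIntegral.norm_integral_le_integral_norm hx.2
      _ ≤ ∫ y in a..b, |g' y| :=
          intervalIntegral.integral_mono_interval hx.1.le hx.2 le_rfl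
            (Eventually.of_forall fun _ => abs_nonneg _) hg'.abs
  have hsplit : (b - a) * g b - ∫ x in a..b, g x = ∫ x in a..b, (g b - g x) := by
    rw [intervalIntegral.integral_sub intervalIntegrable_const
      ((uIcc_of_le hab).symm ▸ hg_cont).intervalIntegrable, intervalIntegral.integral_const,
      smul_eq_mul]
  rw [hsplit, ← Real.norm_eq_abs, mul_comm, ← abs_of_nonneg (sub_nonneg.2 hab)]
  exact intervalIntegral.norm_integral_le_of_norm_le_const hvar

theorem abs_sum_range_mul_sub_integral_le {t : ℝ} (ht : 0 < t) (N : ℕ)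
    (hg : ∀ x ∈ Ici 0, HasDerivAt g (g' x) x) (hg' : IntegrableOn g' (Ioi 0)) :
    |∑ n ∈ Finset.range N, t * g (t * (n + 1)) - ∫ x in 0..t * N, g x| ≤
      t * ∫ x in Ioi 0, |g' x| := by
  have hg_cont : ContinuousOn g (Ici 0) := fun x hx =>
    (hg x hx).continuousAt.continuousWithinAt
  have hnode : ∀ k : ℕ, 0 ≤ t * k := fun k => by positivity
  have hstep : ∀ k : ℕ, t * k ≤ t * (k + 1) := fun k => by gcongr; linarith
  have hsum : ∀ f : ℝ → ℝ, (∀ k : ℕ, IntervalIntegrable f volume (t * k) (t * (k + 1))) →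
      ∑ k ∈ Finset.range N, ∫ x in t * k..t * (k + 1), f x = ∫ x in 0..t * N, f x := by
    intro f hf
    simpa using intervalIntegral.sum_integral_adjacent_intervals (a := fun k : ℕ => t * k)
      (f := f) (μ := volume) (n := N) fun k _ => by exact_mod_cast hf k
  have hg_int : ∀ k : ℕ, IntervalIntegrable g volume (t * k) (t * (k + 1)) := fun k =>
    (hg_cont.mono fun _ hx => (hnode k).trans hx.1).intervalIntegrable_of_Icc (hstep k)
  have hg'_int : ∀ k : ℕ, IntervalIntegrable g' volume (t * k) (t * (k + 1)) := fun k =>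
    (intervalIntegrable_iff_integrableOn_Ioc_of_le (hstep k)).2
      (hg'.mono_set (Ioc_subset_Ioi_self.trans (Ioi_subset_Ioi (hnode k))))
  calc |∑ n ∈ Finset.range N, t * g (t * (n + 1)) - ∫ x in 0..t * N, g x|
      = |∑ n ∈ Finset.range N,
          (t * g (t * (n + 1)) - ∫ x in t * n..t * (n + 1), g x)| := by
        rw [Finset.sum_sub_distrib, hsum g hg_int]
    _ ≤ ∑ n ∈ Finset.range N,
          |t * g (t * (n + 1)) - ∫ x in t * n..t * (n + 1), g x| :=
        Finset.abs_sum_le_sum_abs _ _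
    _ ≤ ∑ n ∈ Finset.range N, t * ∫ x in t * n..t * (n + 1), |g' x| := by
        refine Finset.sum_le_sum fun n _ => ?_
        have h := abs_mul_sub_integral_le_of_hasDerivAt (hstep n)
          (fun x hx => hg x ((hnode n).trans hx.1)) (hg'_int n)
        rwa [show t * (n + 1) - t * n = t by ring] at h
    _ = t * ∫ x in 0..t * N, |g' x| := by
        rw [← Finset.mul_sum, hsum _ fun k => (hg'_int k).abs]
    _ ≤ t * ∫ x in Ioi 0, |g' x| := by
        gcongr
        rw [intervalIntegral.integral_of_le (hnode N)]
        exact setIntegral_mono_set hg'.abs (Eventually.of_forall fun _ => abs_nonneg _)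
          Ioc_subset_Ioi_self.eventuallyLE

theorem tendsto_mul_tsum_nhdsGT_zero (hg : ∀ x ∈ Ici 0, HasDerivAt g (g' x) x)
    (hg' : IntegrableOn g' (Ioi 0)) (hgi : IntegrableOn g (Ioi 0)) (hg0 : ∀ x ∈ Ioi 0, 0 ≤ g x) :
    Tendsto (fun t => t * ∑' n : ℕ, g (t * (n + 1))) (𝓝[>] 0) (𝓝 (∫ x in Ioi 0, g x)) := by
  set D := ∫ x in Ioi 0, |g' x|
  set I := ∫ x in Ioi 0, g x
  have hclose : ∀ t ∈ Ioi (0 : ℝ), |t * ∑' n : ℕ, g (t * (n + 1)) - I| ≤ t * D := by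
    intro t (ht : 0 < t)
    have hpartial := fun N => abs_sum_range_mul_sub_integral_le ht N hg hg'
    have hI : ∀ N : ℕ, ∫ x in 0..t * N, g x ≤ I := fun N => by
      rw [intervalIntegral.integral_of_le (by positivity)]
      exact setIntegral_mono_set hgi (ae_restrict_of_forall_mem measurableSet_Ioi hg0)
        Ioc_subset_Ioi_self.eventuallyLE
    have hsummable : Summable fun n : ℕ => g (t * (n + 1)) :=
      summable_of_sum_range_le (c := (I + t * D) / t)
        (fun n => hg0 _ (mem_Ioi.2 (by positivity))) fun N => by
        rw [le_div_iff₀ ht, mul_comm, Finset.mul_sum]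
        linarith [(abs_le.1 (hpartial N)).2, hI N]
    have htend : Tendsto (fun N : ℕ => ∑ n ∈ Finset.range N, t * g (t * (n + 1)) -
        ∫ x in 0..t * N, g x) atTop (𝓝 (t * ∑' n : ℕ, g (t * (n + 1)) - I)) :=
      (hsummable.hasSum.mul_left t).tendsto_sum_nat.sub
        (intervalIntegral_tendsto_integral_Ioi 0 hgi
          (tendsto_natCast_atTop_atTop.const_mul_atTop ht))
    exact le_of_tendsto' htend.abs hpartial
  rw [tendsto_iff_dist_tendsto_zero]
  refine squeeze_zero' (Eventually.of_forall fun _ => dist_nonneg)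
    (eventually_mem_nhdsWithin.mono hclose) ?_
  simpa using tendsto_nhdsWithin_of_tendsto_nhds ((continuous_mul_const D).tendsto 0)

end RiemannSum

theorem tendsto_comp_mul_div_of_tendsto_rpow_mul {f : ℝ → ℝ} {p L a : ℝ}
    (hf : Tendsto (fun α => α ^ p * f α) (𝓝[>] 0) (𝓝 L)) (hL : L ≠ 0) (ha : 0 < a) :
    Tendsto (fun α => f (a * α) / f α) (𝓝[>] 0) (𝓝 (a ^ (-p))) := by
  have hmul : Tendsto (a * ·) (𝓝[>] 0) (𝓝[>] 0) := by
    simpa using TendstoNhdsWithinIoi.const_mul ha (tendsto_id (x := 𝓝[>] (0 : ℝ)))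
  have hlim := ((hf.comp hmul).div hf hL).const_mul (a ^ (-p))
  rw [div_self hL, mul_one] at hlim
  refine hlim.congr' (eventually_mem_nhdsWithin.mono fun α (hα : 0 < α) => ?_)
  have hap : 0 < a ^ p := Real.rpow_pos_of_pos ha p
  have hαp : 0 < α ^ p := Real.rpow_pos_of_pos hα p
  simp only [Pi.div_apply, Function.comp_apply]
  rw [Real.mul_rpow ha.le hα.le, Real.rpow_neg ha.le]
  field_simp

noncomputable def heatProfile (x : ℝ) : ℝ := x ^ 2 * Real.exp (-x ^ 2 / 4)

theorem hasDerivAt_heatProfile (x : ℝ) :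
    HasDerivAt heatProfile ((2 * x - x ^ 3 / 2) * Real.exp (-x ^ 2 / 4)) x := by
  have hexp : HasDerivAt (fun y : ℝ => Real.exp (-y ^ 2 / 4))
      (Real.exp (-x ^ 2 / 4) * (-(2 * x) / 4)) x := by
    simpa using ((hasDerivAt_pow 2 x).neg.div_const 4).exp
  refine ((hasDerivAt_pow 2 x).mul hexp).congr_deriv ?_
  norm_num
  ring

theorem integrableOn_pow_mul_exp_neg_sq_div_four (k : ℕ) :
    IntegrableOn (fun x : ℝ => x ^ k * Real.exp (-x ^ 2 / 4)) (Ioi 0) := by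
  refine (integrableOn_rpow_mul_exp_neg_mul_sq (b := 1 / 4) (by norm_num) (s := k)
    (by linarith [k.cast_nonneg (α := ℝ)])).congr_fun (fun x _ => ?_) measurableSet_Ioi
  dsimp only
  rw [Real.rpow_natCast, neg_div, neg_mul, one_div_mul_eq_div]

theorem integrableOn_heatProfile : IntegrableOn heatProfile (Ioi 0) :=
  integrableOn_pow_mul_exp_neg_sq_div_four 2

theorem integrableOn_deriv_heatProfile :
    IntegrableOn (fun x : ℝ => (2 * x - x ^ 3 / 2) * Real.exp (-x ^ 2 / 4)) (Ioi 0) := by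
  refine IntegrableOn.congr_fun
    (((integrableOn_pow_mul_exp_neg_sq_div_four 1).const_mul 2).sub
      ((integrableOn_pow_mul_exp_neg_sq_div_four 3).const_mul (1 / 2)))
    (fun x _ => ?_) measurableSet_Ioi
  simp only [Pi.sub_apply]
  ring

theorem integral_heatProfile_pos : 0 < ∫ x in Ioi 0, heatProfile x := by
  have hpos : ∀ x ∈ Ioi (0 : ℝ), 0 < heatProfile x := fun x (hx : 0 < x) => by
    unfold heatProfile; positivity
  rw [setIntegral_pos_iff_support_of_nonneg_ae
    (ae_restrict_of_forall_mem measurableSet_Ioi fun x hx => (hpos x hx).le)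
    integrableOn_heatProfile]
  calc (0 : ENNReal) < volume (Ioi (0 : ℝ)) := by simp
    _ ≤ volume (Function.support heatProfile ∩ Ioi 0) :=
      measure_mono fun x hx => ⟨(hpos x hx).ne', hx⟩

theorem rpow_mul_heatKernelId {α : ℝ} (hα : 0 < α) :
    α ^ (3 / 2 : ℝ) * heatKernelId α =
      Real.exp (α / 4) * (√α * ∑' n : ℕ, heatProfile (√α * (n + 1))) := by
  have hsq : √α ^ 2 = α := Real.sq_sqrt hα.le
  have hpow : α ^ (3 / 2 : ℝ) = α * √α := by
    rw [Real.sqrt_eq_rpow, ← Real.rpow_one_add' hα.le (by norm_num)]; norm_num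
  rw [heatKernelId, hpow, ← tsum_mul_left, ← tsum_mul_left, ← tsum_mul_left]
  refine tsum_congr fun n => ?_
  have hexp : Real.exp (-α * (n * (n + 2)) / 4) =
      Real.exp (α / 4) * Real.exp (-(α * (n + 1) ^ 2) / 4) := by
    rw [← Real.exp_add]; ring_nf
  rw [heatProfile, hexp, mul_pow, hsq]
  ring

theorem tendsto_rpow_mul_heatKernelId :
    Tendsto (fun α => α ^ (3 / 2 : ℝ) * heatKernelId α) (𝓝[>] 0)
      (𝓝 (∫ x in Ioi 0, heatProfile x)) := by
  have hsqrt : Tendsto Real.sqrt (𝓝[>] 0) (𝓝[>] 0) :=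
    tendsto_nhdsWithin_of_tendsto_nhds_of_eventually_within _
      ((Real.continuous_sqrt.tendsto' 0 0 Real.sqrt_zero).mono_left nhdsWithin_le_nhds)
      (eventually_mem_nhdsWithin.mono fun _ => Real.sqrt_pos.2)
  have hexp : Tendsto (fun α : ℝ => Real.exp (α / 4)) (𝓝[>] 0) (𝓝 1) :=
    ((show Continuous fun α : ℝ => Real.exp (α / 4) by fun_prop).tendsto' 0 1
      (by simp)).mono_left nhdsWithin_le_nhds
  have hsum := (tendsto_mul_tsum_nhdsGT_zero (fun x _ => hasDerivAt_heatProfile x)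
    integrableOn_deriv_heatProfile integrableOn_heatProfile
    fun x _ => by unfold heatProfile; positivity).comp hsqrt
  have hlim := hexp.mul hsum
  rw [one_mul] at hlim
  exact hlim.congr' (eventually_mem_nhdsWithin.mono fun α hα =>
    (rpow_mul_heatKernelId hα).symm)

/-- For any `a > 0`, the ratio of heat kernel values at the identity on `SU(2)` satisfies
`K_{aα}(1) / K_α(1) → a^{-3/2}` as `α → 0⁺`. -/
theorem stmt5 (a : ℝ) (ha : 0 < a) :
    Tendsto (fun α : ℝ => heatKernelId (a * α) / heatKernelId α)
      (nhdsWithin 0 (Set.Ioi 0)) (nhds (a ^ (-(3 : ℝ) / 2))) := by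
  have h := tendsto_comp_mul_div_of_tendsto_rpow_mul tendsto_rpow_mul_heatKernelId
    integral_heatProfile_pos.ne' ha
  rwa [neg_div]
end

section
/- The SU(2) heat kernel at the identity satisfies the small-time asymptotic K_alpha(1) ~ sqrt(4 pi) * alpha^{-3/2} as alpha -> 0+, i.e., alpha^{3/2} * sum_{n=1}^{infty} n^2 e^{-alpha n^2/4} e^{alpha/4} -> sqrt(4 pi). -/
/-!
Put `θ(t) = ∑_{n ∈ ℤ} e^{-t n²}` and `S(t) = ∑_{n ∈ ℤ} n² e^{-t n²} = -θ'(t)`. Poisson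
summation gives Jacobi's identity `θ(t) = √π t^{-1/2} θ(π²/t)`; differentiating it yields, with
`u = π²/t`, `t^{3/2} S(t) = (√π/2) θ(u) - √π u S(u)`. As `t → 0⁺` we have `u → ∞`, and by
dominated convergence `θ(u) → 1` (only `n = 0` survives) and `u S(u) → 0`, so
`t^{3/2} S(t) → √π/2`. The theorem is the case `t = α/4`: the sum over `n ≥ 1` is `S(α/4)/2` and
`α^{3/2} = 8 (α/4)^{3/2}`, giving the limit `4 · √π/2 = √(4π)`.
-/

open Filter Topology Real

lemma mul_exp_neg_le_two_mul_exp_neg_half (x : ℝ) : x * rexp (-x) ≤ 2 * rexp (-(x / 2)) := by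
  have h := (mul_exp_neg_le_exp_neg_one (x / 2)).trans (exp_le_one_iff.2 (by norm_num))
  calc x * rexp (-x) = 2 * ((x / 2) * rexp (-(x / 2))) * rexp (-(x / 2)) := by
        rw [show -x = -(x / 2) + -(x / 2) by ring, exp_add]; ring
    _ ≤ 2 * 1 * rexp (-(x / 2)) := by gcongr
    _ = 2 * rexp (-(x / 2)) := by ring

namespace IntGaussian

noncomputable def theta (t : ℝ) : ℝ := ∑' n : ℤ, rexp (-t * n ^ 2)

noncomputable def thetaMoment (t : ℝ) : ℝ := ∑' n : ℤ, (n : ℝ) ^ 2 * rexp (-t * n ^ 2)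

lemma summable_abs_pow_mul_exp_neg_mul_sq (k : ℕ) {c : ℝ} (hc : 0 < c) :
    Summable fun n : ℤ => |(n : ℝ)| ^ k * rexp (-c * n ^ 2) := by
  refine (summable_pow_mul_jacobiTheta₂_term_bound 0 (div_pos hc pi_pos) k).congr fun n => ?_
  rw [Int.cast_abs]
  congr 2
  field_simp
  ring

lemma summable_exp_neg_mul_sq {c : ℝ} (hc : 0 < c) :
    Summable fun n : ℤ => rexp (-c * n ^ 2) := by
  simpa using summable_abs_pow_mul_exp_neg_mul_sq 0 hc

lemma summable_sq_mul_exp_neg_mul_sq {c : ℝ} (hc : 0 < c) :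
    Summable fun n : ℤ => (n : ℝ) ^ 2 * rexp (-c * n ^ 2) := by
  simpa using summable_abs_pow_mul_exp_neg_mul_sq 2 hc

lemma hasDerivAt_theta {t : ℝ} (ht : 0 < t) : HasDerivAt theta (-thetaMoment t) t := by
  have hterm (n : ℤ) (s : ℝ) :
      HasDerivAt (fun s => rexp (-s * n ^ 2)) (-((n : ℝ) ^ 2 * rexp (-s * n ^ 2))) s :=
    ((hasDerivAt_neg s).mul_const _).exp.congr_deriv (by ring)
  have hbound (n : ℤ) (s : ℝ) (hs : s ∈ Set.Ioi (t / 2)) :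
      ‖-((n : ℝ) ^ 2 * rexp (-s * n ^ 2))‖ ≤ (n : ℝ) ^ 2 * rexp (-(t / 2) * n ^ 2) := by
    rw [norm_neg, Real.norm_of_nonneg (by positivity)]
    gcongr
    exact (Set.mem_Ioi.1 hs).le
  have hmem : t ∈ Set.Ioi (t / 2) := by simp [ht]
  rw [thetaMoment, ← tsum_neg]
  exact hasDerivAt_tsum_of_isPreconnected (summable_sq_mul_exp_neg_mul_sq (half_pos ht))
    isOpen_Ioi isPreconnected_Ioi (fun n s _ => hterm n s) hbound hmem
    (summable_exp_neg_mul_sq ht) hmem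

lemma theta_functional_equation {t : ℝ} (ht : 0 < t) :
    theta t = √π * t ^ (-(1 / 2) : ℝ) * theta (π ^ 2 / t) := by
  have h := Real.tsum_exp_neg_mul_int_sq (div_pos ht pi_pos)
  have hl : -π * (t / π) = -t := by field_simp
  have hr : -π / (t / π) = -(π ^ 2 / t) := by field_simp
  have hc : 1 / (t / π) ^ (1 / 2 : ℝ) = √π * t ^ (-(1 / 2) : ℝ) := by
    rw [div_rpow ht.le pi_pos.le, rpow_neg ht.le, sqrt_eq_rpow]
    field_simp
  simp only [hl, hr, hc] at h
  exact h

lemma rpow_mul_thetaMoment_eq {t : ℝ} (ht : 0 < t) :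
    t ^ (3 / 2 : ℝ) * thetaMoment t =
      √π / 2 * theta (π ^ 2 / t) - √π * (π ^ 2 / t * thetaMoment (π ^ 2 / t)) := by
  have hinv : HasDerivAt (fun s => π ^ 2 / s) (-(π ^ 2 / t ^ 2)) t := by
    simpa [div_eq_mul_inv] using (hasDerivAt_inv ht.ne').const_mul (π ^ 2)
  have hrhs := ((hasDerivAt_rpow_const (p := -(1 / 2)) (Or.inl ht.ne')).const_mul √π).mul
    ((hasDerivAt_theta (by positivity : 0 < π ^ 2 / t)).comp t hinv)
  have heq : theta =ᶠ[𝓝 t] fun s => √π * s ^ (-(1 / 2) : ℝ) * theta (π ^ 2 / s) := by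
    filter_upwards [Ioi_mem_nhds ht] with s hs using theta_functional_equation hs
  have hderiv := (hasDerivAt_theta ht).unique (hrhs.congr_of_eventuallyEq heq)
  have h1 : t ^ (3 / 2 : ℝ) * t ^ (-(1 / 2) - 1 : ℝ) = 1 := by
    rw [← rpow_add ht]; norm_num
  have h2 : t ^ (3 / 2 : ℝ) * t ^ (-(1 / 2) : ℝ) = t := by
    rw [← rpow_add ht]; norm_num
  simp only [Function.comp_apply] at hderiv
  have h3 : t * (π ^ 2 / t ^ 2) = π ^ 2 / t := by field_simp
  linear_combination (-t ^ (3 / 2 : ℝ)) * hderiv + (√π / 2 * theta (π ^ 2 / t)) * h1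
    - (√π * thetaMoment (π ^ 2 / t) * (π ^ 2 / t ^ 2)) * h2
    - √π * thetaMoment (π ^ 2 / t) * h3

lemma tendsto_mul_intCast_sq_atTop {n : ℤ} (hn : n ≠ 0) :
    Tendsto (fun u : ℝ => u * n ^ 2) atTop atTop :=
  tendsto_id.atTop_mul_const (by positivity)

lemma tendsto_theta_atTop : Tendsto theta atTop (𝓝 1) := by
  have hlim (n : ℤ) :
      Tendsto (fun u : ℝ => rexp (-u * n ^ 2)) atTop (𝓝 (if n = 0 then 1 else 0)) := by
    split_ifs with hn
    · simp [hn]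
    · simpa [Function.comp_def] using
        tendsto_exp_atBot.comp (tendsto_neg_atTop_atBot.comp (tendsto_mul_intCast_sq_atTop hn))
  have hbound : ∀ᶠ u : ℝ in atTop, ∀ n : ℤ, ‖rexp (-u * n ^ 2)‖ ≤ rexp (-1 * n ^ 2) := by
    filter_upwards [eventually_ge_atTop 1] with u hu n
    rw [Real.norm_of_nonneg (exp_nonneg _)]
    gcongr
  have h := tendsto_tsum_of_dominated_convergence (summable_exp_neg_mul_sq one_pos) hlim hbound
  rwa [tsum_ite_eq] at h

lemma tendsto_mul_thetaMoment_atTop : Tendsto (fun u => u * thetaMoment u) atTop (𝓝 0) := by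
  have hlim (n : ℤ) :
      Tendsto (fun u : ℝ => u * n ^ 2 * rexp (-(u * n ^ 2))) atTop (𝓝 0) := by
    rcases eq_or_ne n 0 with rfl | hn
    · simp
    · simpa [Function.comp_def] using
        (tendsto_pow_mul_exp_neg_atTop_nhds_zero 1).comp (tendsto_mul_intCast_sq_atTop hn)
  have hbound : ∀ᶠ u : ℝ in atTop, ∀ n : ℤ,
      ‖u * n ^ 2 * rexp (-(u * n ^ 2))‖ ≤ 2 * rexp (-(1 / 2) * n ^ 2) := by
    filter_upwards [eventually_ge_atTop 1] with u hu n
    rw [Real.norm_of_nonneg (by positivity)]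
    refine (mul_exp_neg_le_two_mul_exp_neg_half _).trans ?_
    gcongr
    nlinarith [sq_nonneg (n : ℝ)]
  have h := tendsto_tsum_of_dominated_convergence
    ((summable_exp_neg_mul_sq one_half_pos).mul_left 2) hlim hbound
  simp only [tsum_zero] at h
  refine h.congr fun u => ?_
  rw [thetaMoment, ← tsum_mul_left]
  congr 1 with n
  ring_nf

lemma tendsto_rpow_mul_thetaMoment :
    Tendsto (fun t => t ^ (3 / 2 : ℝ) * thetaMoment t) (𝓝[>] 0) (𝓝 (√π / 2)) := by
  have hu : Tendsto (fun t : ℝ => π ^ 2 / t) (𝓝[>] 0) atTop := by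
    simpa only [div_eq_mul_inv] using tendsto_inv_nhdsGT_zero.const_mul_atTop (by positivity)
  have h := ((tendsto_theta_atTop.comp hu).const_mul (√π / 2)).sub
    ((tendsto_mul_thetaMoment_atTop.comp hu).const_mul √π)
  rw [mul_one, mul_zero, sub_zero] at h
  refine h.congr' ?_
  filter_upwards [self_mem_nhdsWithin] with t ht
  exact (rpow_mul_thetaMoment_eq ht).symm

lemma tsum_succ_sq_mul_exp_neg_mul_sq {c : ℝ} (hc : 0 < c) :
    ∑' n : ℕ, ((n : ℝ) + 1) ^ 2 * rexp (-c * ((n : ℝ) + 1) ^ 2) = thetaMoment c / 2 := by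
  have heven : Function.Even fun n : ℤ => (n : ℝ) ^ 2 * rexp (-c * n ^ 2) := fun n => by simp
  rw [thetaMoment,
    tsum_int_eq_zero_add_two_mul_tsum_pnat heven (summable_sq_mul_exp_neg_mul_sq hc),
    tsum_pnat_eq_tsum_succ (f := fun n : ℕ => ((n : ℤ) : ℝ) ^ 2 * rexp (-c * ((n : ℤ) : ℝ) ^ 2))]
  simp

end IntGaussian

/-- The `SU(2)` heat kernel at the identity satisfies the small-time asymptotics
`K_α(1) ∼ √(4π) α^{-3/2}` as `α → 0⁺`, i.e.
`α^{3/2} · e^{α/4} · ∑_{n ≥ 1} n² e^{-α n²/4} → √(4π)`. -/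
theorem stmt6 :
    Tendsto
      (fun α : ℝ =>
        α ^ ((3 : ℝ) / 2) *
          (Real.exp (α / 4) *
            ∑' n : ℕ, ((n : ℝ) + 1) ^ 2 * Real.exp (-α * ((n : ℝ) + 1) ^ 2 / 4)))
      (nhdsWithin 0 (Set.Ioi 0)) (nhds (Real.sqrt (4 * Real.pi))) := by
  have hquarter : Tendsto (fun α : ℝ => α / 4) (𝓝[>] 0) (𝓝[>] 0) :=
    tendsto_nhdsWithin_iff.2
      ⟨by simpa using ((continuous_id.div_const (4 : ℝ)).tendsto 0).mono_left nhdsWithin_le_nhds,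
        eventually_nhdsWithin_of_forall fun _ hα => div_pos (Set.mem_Ioi.1 hα) four_pos⟩
  have hexp : Tendsto (fun α : ℝ => rexp (α / 4)) (𝓝[>] 0) (𝓝 1) := by
    simpa [Function.comp_def] using
      ((continuous_exp.comp (continuous_id.div_const 4)).tendsto 0).mono_left nhdsWithin_le_nhds
  have h := ((hexp.mul (IntGaussian.tendsto_rpow_mul_thetaMoment.comp hquarter)).const_mul 4)
  have hval : 4 * (1 * (√π / 2)) = √(4 * π) := by
    rw [sqrt_mul zero_le_four, show (4 : ℝ) = 2 ^ 2 by norm_num, sqrt_sq zero_le_two]; ring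
  rw [hval] at h
  refine h.congr' ?_
  filter_upwards [self_mem_nhdsWithin] with α (hα : 0 < α)
  have hsum : ∑' n : ℕ, ((n : ℝ) + 1) ^ 2 * rexp (-α * ((n : ℝ) + 1) ^ 2 / 4) =
      IntGaussian.thetaMoment (α / 4) / 2 := by
    rw [← IntGaussian.tsum_succ_sq_mul_exp_neg_mul_sq (by positivity)]
    congr! 4
    ring
  have hpow : α ^ (3 / 2 : ℝ) = 8 * (α / 4) ^ (3 / 2 : ℝ) := by
    have h8 : (4 : ℝ) ^ (3 / 2 : ℝ) = 8 := by
      rw [show (4 : ℝ) = 2 ^ (2 : ℝ) by norm_num, ← rpow_mul zero_le_two]; norm_num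
    rw [div_rpow hα.le zero_le_four, h8]
    field_simp
  simp only [Function.comp_apply, hsum, hpow]
  ring
end

section
/- For a connected (d+1)-colored graph, the amplitude of the independent identically distributed colored tensor model can be written as N^{d - (2/(d-1)!) omega(G)}, equivalently the number of faces satisfies F(G) = d + (d(d-1)/4) N(G) - (2/(d-1)!) omega(G), where omega(G) = sum over jackets J of g_J, N(G) is the number of nodes, and jackets are indexed by pairs of cyclic permutations of the d+1 colors. -/
/-- Degree identity for a closed connected `(d+1)`-colored graph with `N` nodes and `F`
faces: with the `d!/2` jackets `j ∈ J`, each an orientable surface with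
`2 - 2 g_J = F_J - (d+1)N/2 + N`, and each bicolored face class counted in exactly
`(d-1)!` jackets (`∑_J F_J = (d-1)! F`), one has
`F = d + d(d-1)N/4 - (2/(d-1)!) ω(G)` where `ω(G) = ∑_J g_J`. -/
theorem stmt9 {ι : Type*} (J : Finset ι) (d N F : ℕ) (hd : 3 ≤ d)
    (gJ FJ : ι → ℤ)
    (hcard : 2 * J.card = Nat.factorial d)
    (hEuler : ∀ j ∈ J,
      (2 : ℚ) - 2 * (gJ j : ℚ) = (FJ j : ℚ) - ((d : ℚ) + 1) * (N : ℚ) / 2 + (N : ℚ))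
    (hfaces : ((∑ j ∈ J, FJ j : ℤ) : ℚ) = (Nat.factorial (d - 1) : ℚ) * (F : ℚ)) :
    (F : ℚ) = (d : ℚ) + (d : ℚ) * ((d : ℚ) - 1) * (N : ℚ) / 4 -
      2 * ((∑ j ∈ J, gJ j : ℤ) : ℚ) / (Nat.factorial (d - 1) : ℚ) := by
  have hsum : ∑ j ∈ J, ((2 : ℚ) - 2 * (gJ j : ℚ)) =
      ∑ j ∈ J, ((FJ j : ℚ) - ((d : ℚ) + 1) * (N : ℚ) / 2 + (N : ℚ)) :=
    Finset.sum_congr rfl hEuler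
  have hfac : (Nat.factorial d : ℚ) = (d : ℚ) * (Nat.factorial (d - 1) : ℚ) := by
    rw [← Nat.cast_mul, Nat.mul_factorial_pred (by omega)]
  have hcard' : (2 : ℚ) * (J.card : ℚ) = (d : ℚ) * (Nat.factorial (d - 1) : ℚ) := by
    rw [← hfac, ← Nat.cast_two, ← Nat.cast_mul, hcard]
  have hne : (Nat.factorial (d - 1) : ℚ) ≠ 0 := by
    exact_mod_cast (Nat.factorial_pos (d - 1)).ne'
  simp only [Finset.sum_sub_distrib, Finset.sum_add_distrib, Finset.sum_const,
    nsmul_eq_mul, ← Finset.mul_sum, Int.cast_sum] at hsum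
  push_cast at hsum hfaces ⊢
  have hd' : (3 : ℚ) ≤ (d : ℚ) := by exact_mod_cast hd
  field_simp
  linear_combination (-4 : ℚ) * hsum - 4 * hfaces + ((4 : ℚ) + (N : ℚ) * ((d : ℚ) - 1)) * hcard'
end

section
/- In a rank-d TGFT with group dimension D, the Abelian divergence degree omega = -2L + D(F - R) of a face-connected subgraph H with V vertices of maximal valency v_max, L lines, and N external legs, satisfies omega = D(d-2) + (D(d-2)-2)L - D(d-2)V + D*rho, where rho = F - R - (d-2)(L - V + 1). Consequently, if the theory contains only vertices of valencies 2k for k <= v_max/2, with n_{2k} vertices of valency 2k, L = sum_k k n_{2k} - N/2 and V = sum_k n_{2k}, then omega <= D(d-2) - ((D(d-2)-2)/2) N + sum_k [(D(d-2)-2)k - D(d-2)] n_{2k} (using rho <= 0 for non-vacuum H). -/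
/-- Abelian divergence degree of a face-connected non-vacuum subgraph of a rank-`d` TGFT
on a group of dimension `D`: with `ω = -2L + D(F - R)` and
`ρ = F - R - (d-2)(L - V + 1)`, one has
`ω = D(d-2) + (D(d-2)-2)L - D(d-2)V + Dρ`; consequently, if
`L = ∑_k k n_{2k} - N/2` and `V = ∑_k n_{2k}` with `n_{2k}` vertices of valency `2k`
(`k ≤ v_max/2 = K`), then, using `ρ ≤ 0`,
`ω ≤ D(d-2) - ((D(d-2)-2)/2) N + ∑_k [(D(d-2)-2)k - D(d-2)] n_{2k}`. -/
theorem stmt13 (d D : ℕ) (hd : 3 ≤ d) (hD : 1 ≤ D)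
    (K : ℕ) (n : ℕ → ℕ)
    (L F R V N ω ρ : ℚ)
    (hω : ω = -2 * L + (D : ℚ) * (F - R))
    (hρ : ρ = F - R - ((d : ℚ) - 2) * (L - V + 1))
    (hL : L = (∑ k ∈ Finset.Icc 1 K, (k : ℚ) * (n k : ℚ)) - N / 2)
    (hV : V = ∑ k ∈ Finset.Icc 1 K, (n k : ℚ))
    (hρ0 : ρ ≤ 0) :
    ω = (D : ℚ) * ((d : ℚ) - 2) + ((D : ℚ) * ((d : ℚ) - 2) - 2) * L -
        (D : ℚ) * ((d : ℚ) - 2) * V + (D : ℚ) * ρ ∧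
    ω ≤ (D : ℚ) * ((d : ℚ) - 2) - (((D : ℚ) * ((d : ℚ) - 2) - 2) / 2) * N +
        ∑ k ∈ Finset.Icc 1 K,
          (((D : ℚ) * ((d : ℚ) - 2) - 2) * (k : ℚ) - (D : ℚ) * ((d : ℚ) - 2)) * (n k : ℚ) := by
  have hFR : F - R = ρ + ((d : ℚ) - 2) * (L - V + 1) := by linarith
  have h1 : ω = (D : ℚ) * ((d : ℚ) - 2) + ((D : ℚ) * ((d : ℚ) - 2) - 2) * L -
      (D : ℚ) * ((d : ℚ) - 2) * V + (D : ℚ) * ρ := by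
    rw [hω, hFR]; ring
  refine ⟨h1, ?_⟩
  have hsum : ∑ k ∈ Finset.Icc 1 K,
      (((D : ℚ) * ((d : ℚ) - 2) - 2) * (k : ℚ) - (D : ℚ) * ((d : ℚ) - 2)) * (n k : ℚ)
      = ((D : ℚ) * ((d : ℚ) - 2) - 2) * (∑ k ∈ Finset.Icc 1 K, (k : ℚ) * (n k : ℚ))
        - (D : ℚ) * ((d : ℚ) - 2) * (∑ k ∈ Finset.Icc 1 K, (n k : ℚ)) := by
    rw [Finset.mul_sum, Finset.mul_sum, ← Finset.sum_sub_distrib]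
    apply Finset.sum_congr rfl
    intro k _; ring
  have hDρ : (D : ℚ) * ρ ≤ 0 := by
    have : (0:ℚ) ≤ (D:ℚ) := by positivity
    exact mul_nonpos_of_nonneg_of_nonpos this hρ0
  rw [h1, hL, hV, hsum]
  nlinarith [hDρ]
end

section
/- The just-renormalizability condition v_max = 2D(d-2)/(D(d-2)-2) for rank-d group field theories on a D-dimensional group with closure constraint, with integer d >= 3, D >= 1 and even integer v_max > 2, has exactly five solutions: (d,D,v_max) in {(3,3,6), (3,4,4), (4,2,4), (5,1,6), (6,1,4)}. -/
/-- The just-renormalizability condition `v_max = 2D(d-2)/(D(d-2)-2)` for rank-`d`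
group field theories on a `D`-dimensional group with closure constraint, with integers
`d ≥ 3`, `D ≥ 1`, `v_max` even, `v_max > 2` and `D(d-2) > 2`, has exactly five
solutions: `(d, D, v_max) ∈ {(3,3,6), (3,4,4), (4,2,4), (5,1,6), (6,1,4)}`. -/
theorem stmt14 :
    {p : ℕ × ℕ × ℕ |
        3 ≤ p.1 ∧ 1 ≤ p.2.1 ∧ 2 < p.2.2 ∧ Even p.2.2 ∧
        2 < p.2.1 * (p.1 - 2) ∧
        p.2.2 * (p.2.1 * (p.1 - 2) - 2) = 2 * (p.2.1 * (p.1 - 2))} =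
      ({(3, 3, 6), (3, 4, 4), (4, 2, 4), (5, 1, 6), (6, 1, 4)} : Set (ℕ × ℕ × ℕ)) := by
  ext ⟨d, D, v⟩
  simp only [Set.mem_setOf_eq, Set.mem_insert_iff, Set.mem_singleton_iff, Prod.mk.injEq]
  constructor
  · rintro ⟨hd, hD, hv, hev, hk, heq⟩
    obtain ⟨k, hkdef⟩ : ∃ k, D * (d - 2) = k := ⟨_, rfl⟩
    rw [hkdef] at heq hk
    have hv4 : 4 ≤ v := by obtain ⟨m, hm⟩ := hev; omega
    have hle : 4 * (k - 2) ≤ v * (k - 2) := Nat.mul_le_mul_right _ hv4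
    have hk34 : k = 3 ∨ k = 4 := by omega
    rcases hk34 with h | h <;> subst h
    · have hv6 : v = 6 := by omega
      have hD3 : D ≤ 3 := Nat.le_of_dvd (by norm_num) ⟨_, hkdef.symm⟩
      interval_cases D <;> omega
    · have hv4' : v = 4 := by omega
      have hD4 : D ≤ 4 := Nat.le_of_dvd (by norm_num) ⟨_, hkdef.symm⟩
      interval_cases D <;> omega
  · rintro (⟨h1, h2, h3⟩ | ⟨h1, h2, h3⟩ | ⟨h1, h2, h3⟩ | ⟨h1, h2, h3⟩ | ⟨h1, h2, h3⟩) <;>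
      subst h1 <;> subst h2 <;> subst h3 <;>
      refine ⟨by norm_num, by norm_num, by norm_num, by decide, by norm_num, by norm_num⟩
end

section
/- In the rank-3, SU(2) (D=3) just-renormalizable TGFT, the non-vacuum face-connected divergent subgraphs (omega = 3 - N/2 - 2 n_2 - n_4 + 3 rho >= 0 with rho <= 0, rho = 0 iff melonic) are exactly the melonic graphs with parameters (N, n_2, n_4, omega) in the list {(6,0,0,0), (4,0,0,1), (4,0,1,0), (2,0,0,2), (2,0,1,1), (2,0,2,0), (2,1,0,0)}. -/
/-- Classification of non-vacuum face-connected divergent subgraphs of the rank-3,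
`SU(2)` (`D = 3`) just-renormalizable TGFT: with degree
`ω = 3 - N/2 - 2 n₂ - n₄ + 3ρ`, `N ≥ 2` even, `ρ ≤ 0` and `ρ = 0` iff the subgraph is
melonic, the divergent subgraphs (`ω ≥ 0`) are exactly the melonic graphs with
`(N, n₂, n₄, ω) ∈ {(6,0,0,0), (4,0,0,1), (4,0,1,0), (2,0,0,2), (2,0,1,1), (2,0,2,0),
(2,1,0,0)}`. -/
theorem stmt16 (N n2 n4 : ℕ) (hN : 2 ≤ N) (hNe : Even N)
    (ρ ω : ℤ) (melonic : Prop)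
    (hmel : melonic ↔ ρ = 0) (hρ : ρ ≤ 0)
    (hω : (ω : ℚ) = 3 - (N : ℚ) / 2 - 2 * (n2 : ℚ) - (n4 : ℚ) + 3 * (ρ : ℚ)) :
    0 ≤ ω ↔ (melonic ∧
      (N, n2, n4, ω) ∈
        ({(6, 0, 0, 0), (4, 0, 0, 1), (4, 0, 1, 0), (2, 0, 0, 2), (2, 0, 1, 1),
          (2, 0, 2, 0), (2, 1, 0, 0)} : Set (ℕ × ℕ × ℕ × ℤ))) := by
  have key : 2 * ω = 6 - (N : ℤ) - 4 * n2 - 2 * n4 + 6 * ρ := by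
    have : (2 * ω : ℚ) = 6 - (N : ℚ) - 4 * n2 - 2 * n4 + 6 * ρ := by
      rw [hω]; ring
    exact_mod_cast this
  obtain ⟨r, hr⟩ := hNe
  simp only [hmel, Set.mem_insert_iff, Set.mem_singleton_iff, Prod.mk.injEq]
  constructor
  · intro hω0
    have hρ0 : ρ = 0 := by omega
    refine ⟨hρ0, ?_⟩
    subst hρ0
    have hN6 : N ≤ 6 := by omega
    have hn2 : n2 ≤ 1 := by omega
    have hn4 : n4 ≤ 2 := by omega
    interval_cases N <;> interval_cases n2 <;> interval_cases n4 <;> omega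
  · rintro ⟨hρ0, h⟩
    rcases h with ⟨h1,h2,h3,h4⟩|⟨h1,h2,h3,h4⟩|⟨h1,h2,h3,h4⟩|⟨h1,h2,h3,h4⟩|⟨h1,h2,h3,h4⟩|⟨h1,h2,h3,h4⟩|⟨h1,h2,h3,h4⟩ <;> omega
end
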